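/- arXiv:0810.3481 — 5 statements merged into one kernel-verified Lean document; each statement's English description precedes it below -/
import Mathlib

section
/- Every complex 3×3 matrix Δ can be transformed, by multiplying on the left by a unitary matrix and conjugating by a real orthogonal matrix (Δ ↦ Rᵀ(UΔ)R), into a Hermitian positive-semidefinite matrix whose real part is diagonal, i.e. a matrix of the form with real diagonal entries Δ₁, Δ₂, Δ₃ and purely imaginary off-diagonal entries given by ε_{ijk}·(i a_k) for real a₁, a₂, a₃. -/
open Matrix ComplexOrder

/-!
By polar decomposition `Δ = W √(ΔᴴΔ)` with `W` unitary, so `U = W⁻¹` makes `UΔ` positive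
semidefinite. Congruence by a real orthogonal `R` keeps it so, and since the real part of a
Hermitian matrix is real symmetric, `R` can be taken to diagonalise it; flipping the sign of one
column of `R` then makes `det R = 1` without spoiling the diagonal form.
-/

namespace LinearMap

variable {𝕜 E V : Type*} [RCLike 𝕜] [NormedAddCommGroup E] [InnerProductSpace 𝕜 E]
  [NormedAddCommGroup V] [InnerProductSpace 𝕜 V] [FiniteDimensional 𝕜 V]

theorem exists_linearIsometry_comp_eq_of_norm_eq (a b : E →ₗ[𝕜] V)
    (h : ∀ x, ‖a x‖ = ‖b x‖) : ∃ W : V →ₗᵢ[𝕜] V, W.toLinearMap ∘ₗ a = b := by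
  -- `a x ↦ b x` is a well-defined isometry on `range a`; extend it to all of `V`.
  have hker : ker a ≤ ker b := fun x hx ↦ by
    rw [mem_ker, ← norm_eq_zero, ← h, norm_eq_zero, ← mem_ker]
    exact hx
  let f : range a →ₗ[𝕜] V := (ker a).liftQ b hker ∘ₗ a.quotKerEquivRange.symm.toLinearMap
  have hf : ∀ x, f (a.rangeRestrict x) = b x := fun x ↦ by
    have hmk : a.quotKerEquivRange (Submodule.Quotient.mk x) = a.rangeRestrict x :=
      Subtype.ext (a.quotKerEquivRange_apply_mk x)
    simp [f, ← hmk]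
  have hf_norm : ∀ y, ‖f y‖ = ‖y‖ := by
    intro y
    obtain ⟨x, rfl⟩ := a.surjective_rangeRestrict y
    rw [hf]
    exact (h x).symm
  refine ⟨LinearIsometry.extend ⟨f, hf_norm⟩, ext fun x ↦ ?_⟩
  exact (LinearIsometry.extend_apply _ (a.rangeRestrict x)).trans (hf x)

end LinearMap

namespace Matrix

section PolarDecomposition

variable {𝕜 n : Type*} [RCLike 𝕜] [Fintype n] [DecidableEq n]

theorem norm_toEuclideanCLM_apply_eq_of_conjTranspose_mul_self_eq {A B : Matrix n n 𝕜}
    (h : Aᴴ * A = Bᴴ * B) (x : EuclideanSpace 𝕜 n) :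
    ‖toEuclideanCLM (𝕜 := 𝕜) A x‖ = ‖toEuclideanCLM (𝕜 := 𝕜) B x‖ := by
  have hnorm_sq : ∀ C : Matrix n n 𝕜, ‖toEuclideanCLM (𝕜 := 𝕜) C x‖ ^ 2 =
      RCLike.re (inner 𝕜 x (toEuclideanCLM (𝕜 := 𝕜) (Cᴴ * C) x)) := fun C ↦ by
    rw [← star_eq_conjTranspose, map_mul, map_star, ContinuousLinearMap.star_eq_adjoint]
    exact (toEuclideanCLM (𝕜 := 𝕜) C).apply_norm_sq_eq_inner_adjoint_right x
  rw [← sq_eq_sq₀ (norm_nonneg _) (norm_nonneg _), hnorm_sq, hnorm_sq, h]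

theorem exists_mem_unitaryGroup_mul_eq_of_conjTranspose_mul_self_eq {A B : Matrix n n 𝕜}
    (h : Aᴴ * A = Bᴴ * B) : ∃ U ∈ unitaryGroup n 𝕜, U * A = B := by
  obtain ⟨W, hW⟩ := LinearMap.exists_linearIsometry_comp_eq_of_norm_eq
    (toEuclideanCLM (𝕜 := 𝕜) A).toLinearMap (toEuclideanCLM (𝕜 := 𝕜) B).toLinearMap
    (norm_toEuclideanCLM_apply_eq_of_conjTranspose_mul_self_eq h)
  refine ⟨(toEuclideanCLM (n := n) (𝕜 := 𝕜)).symm W.toContinuousLinearMap, ?_, ?_⟩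
  · rw [mem_unitaryGroup_iff']
    apply EquivLike.injective (toEuclideanCLM (n := n) (𝕜 := 𝕜))
    rw [map_mul, map_star, StarAlgEquiv.apply_symm_apply, map_one,
      ContinuousLinearMap.star_eq_adjoint]
    exact W.adjoint_comp_self
  · apply EquivLike.injective (toEuclideanCLM (n := n) (𝕜 := 𝕜))
    rw [map_mul, StarAlgEquiv.apply_symm_apply]
    exact ContinuousLinearMap.ext (LinearMap.congr_fun hW)

open scoped MatrixOrder in
theorem exists_mem_unitaryGroup_mul_posSemidef (A : Matrix n n 𝕜) :
    ∃ U ∈ unitaryGroup n 𝕜, (U * A).PosSemidef := by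
  have hP : (CFC.sqrt (Aᴴ * A)).PosSemidef := (CFC.sqrt_nonneg _).posSemidef
  have hPP : (CFC.sqrt (Aᴴ * A))ᴴ * CFC.sqrt (Aᴴ * A) = Aᴴ * A := by
    rw [hP.isHermitian.eq, CFC.sqrt_mul_sqrt_self _ (posSemidef_conjTranspose_mul_self A).nonneg]
  obtain ⟨U, hU, hUA⟩ := exists_mem_unitaryGroup_mul_eq_of_conjTranspose_mul_self_eq hPP.symm
  exact ⟨U, hU, hUA ▸ hP⟩

end PolarDecomposition

section RealDiagonalization

variable {n : Type*} [Fintype n] [DecidableEq n]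

theorem diagonal_mem_orthogonalGroup {e : n → ℝ} (he : ∀ i, e i * e i = 1) :
    diagonal e ∈ orthogonalGroup n ℝ := by
  rw [mem_orthogonalGroup_iff', diagonal_transpose, diagonal_mul_diagonal, ← diagonal_one]
  exact congrArg diagonal (funext he)

theorem exists_mul_diagonal_mem_specialOrthogonalGroup {V : Matrix n n ℝ}
    (hV : V ∈ orthogonalGroup n ℝ) :
    ∃ e : n → ℝ, V * diagonal e ∈ specialOrthogonalGroup n ℝ := by
  rcases isEmpty_or_nonempty n with hn | ⟨⟨i₀⟩⟩
  · exact ⟨1, by simpa using hV, det_isEmpty⟩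
  have hdet : V.det * V.det = 1 := by
    simpa using congrArg det ((mem_orthogonalGroup_iff' n ℝ).mp hV)
  set e : n → ℝ := Function.update 1 i₀ V.det
  have he : ∀ i, e i * e i = 1 := fun i ↦ by
    rcases eq_or_ne i i₀ with rfl | hi <;> simp [e, *]
  refine ⟨e, mul_mem hV (diagonal_mem_orthogonalGroup he), ?_⟩
  show (V * diagonal e).det = 1
  rw [det_mul, det_diagonal, Finset.prod_update_of_mem (Finset.mem_univ _)]
  simpa using hdet

theorem IsHermitian.exists_mem_specialOrthogonalGroup_isDiag {S : Matrix n n ℝ}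
    (hS : S.IsHermitian) : ∃ R ∈ specialOrthogonalGroup n ℝ, (Rᵀ * S * R).IsDiag := by
  set V : Matrix n n ℝ := (hS.eigenvectorUnitary : Matrix n n ℝ)
  have hVSV : Vᵀ * S * V = diagonal hS.eigenvalues := by
    simpa [V, Unitary.conjStarAlgAut_apply, star_eq_conjTranspose]
      using hS.conjStarAlgAut_star_eigenvectorUnitary
  obtain ⟨e, hR⟩ := exists_mul_diagonal_mem_specialOrthogonalGroup hS.eigenvectorUnitary.2
  refine ⟨V * diagonal e, hR, ?_⟩
  have hconj : (V * diagonal e)ᵀ * S * (V * diagonal e) =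
      diagonal e * (Vᵀ * S * V) * diagonal e := by
    simp only [transpose_mul, diagonal_transpose, Matrix.mul_assoc]
  rw [hconj, hVSV, diagonal_mul_diagonal, diagonal_mul_diagonal]
  exact isDiag_diagonal _

end RealDiagonalization

section RealPart

variable {l m n o : Type*}

theorem map_re_map_ofReal_mul_mul_map_ofReal [Fintype m] [Fintype n] (A : Matrix l m ℝ)
    (M : Matrix m n ℂ) (B : Matrix n o ℝ) :
    (A.map Complex.ofReal * M * B.map Complex.ofReal).map Complex.re =
      A * M.map Complex.re * B := by
  ext i j
  simp [mul_apply, Complex.re_sum, Finset.sum_mul]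

theorem transpose_map_ofReal (R : Matrix m n ℝ) :
    (R.map Complex.ofReal)ᵀ = (R.map Complex.ofReal)ᴴ := by
  ext i j
  simp

theorem IsHermitian.map_re {M : Matrix n n ℂ} (hM : M.IsHermitian) :
    (M.map Complex.re).IsHermitian :=
  hM.map _ fun z ↦ by simp

end RealPart

end Matrix

/-- Every complex 3×3 matrix can be brought, by a left unitary transformation and
conjugation by a real special orthogonal matrix, to a Hermitian positive-semidefinite
matrix whose real (symmetric) part is diagonal. -/
theorem order_parameter_normal_form (Δ : Matrix (Fin 3) (Fin 3) ℂ) :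
    ∃ (U : Matrix (Fin 3) (Fin 3) ℂ) (R : Matrix (Fin 3) (Fin 3) ℝ),
      U ∈ Matrix.unitaryGroup (Fin 3) ℂ ∧
      R ∈ Matrix.orthogonalGroup (Fin 3) ℝ ∧ R.det = 1 ∧
      ((R.map Complex.ofReal)ᵀ * (U * Δ) * R.map Complex.ofReal).PosSemidef ∧
      (∀ i j : Fin 3, i ≠ j →
        (((R.map Complex.ofReal)ᵀ * (U * Δ) * R.map Complex.ofReal) i j).re = 0) := by
  obtain ⟨U, hU, hUΔ⟩ := Δ.exists_mem_unitaryGroup_mul_posSemidef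
  obtain ⟨R, ⟨hR, hdet⟩, hdiag⟩ :=
    hUΔ.isHermitian.map_re.exists_mem_specialOrthogonalGroup_isDiag
  refine ⟨U, R, hU, hR, hdet, ?_, fun i j hij ↦ ?_⟩
  · rw [transpose_map_ofReal]
    exact hUΔ.conjTranspose_mul_mul_same _
  · have hre := congrFun₂ (map_re_map_ofReal_mul_mul_map_ofReal Rᵀ (U * Δ) R) i j
    rw [transpose_map] at hre
    exact hre.trans (hdiag hij)
end

section
/- Let Δ be a 3×3 Hermitian positive-semidefinite matrix, U ∈ U(3), and R ∈ SO(3). If U Rᵀ Δ R = Δ, then U Δ = Δ and Rᵀ Δ R = Δ. -/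
open Matrix ComplexOrder

/-! Since `R` is real, `Rᵀ Δ R = Rᴴ Δ R` is again positive semidefinite, so `U (Rᵀ Δ R) = Δ`
says that `Rᵀ Δ R` and `Δ` are Hermitian factors of polar decompositions of the same matrix.
Then `(Rᵀ Δ R)² = (U Rᵀ Δ R)ᴴ (U Rᵀ Δ R) = Δ²`, and positive semidefinite square roots are
unique. -/

theorem Matrix.conjTranspose_map_ofReal {m n : Type*} (R : Matrix m n ℝ) :
    (R.map Complex.ofReal)ᴴ = (R.map Complex.ofReal)ᵀ := by
  rw [← conjTranspose_map _ fun x => (Complex.conj_ofReal x).symm,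
    conjTranspose_eq_transpose_of_trivial, transpose_map]

theorem Matrix.PosSemidef.transpose_map_ofReal_mul_mul_same {n : Type*} [Fintype n]
    {A : Matrix n n ℂ} (hA : A.PosSemidef) (R : Matrix n n ℝ) :
    ((R.map Complex.ofReal)ᵀ * A * R.map Complex.ofReal).PosSemidef := by
  simpa only [conjTranspose_map_ofReal] using hA.conjTranspose_mul_mul_same (R.map Complex.ofReal)

theorem Matrix.PosSemidef.eq_of_unitary_mul_eq {n 𝕜 : Type*} [Fintype n] [DecidableEq n]
    [RCLike 𝕜] {P Q U : Matrix n n 𝕜} (hP : P.PosSemidef) (hQ : Q.PosSemidef)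
    (hU : U ∈ unitaryGroup n 𝕜) (h : U * P = Q) : P = Q := by
  have hsq : P ^ 2 = Q ^ 2 := by
    calc P ^ 2 = Pᴴ * (star U * U) * P := by
          rw [hU.1, mul_one, hP.1, sq]
      _ = (U * P)ᴴ * (U * P) := by
          rw [conjTranspose_mul, star_eq_conjTranspose]; simp only [mul_assoc]
      _ = Q ^ 2 := by rw [h, hQ.1, sq]
  open scoped MatrixOrder Matrix.Norms.L2Operator in
  exact (CFC.sq_eq_sq_iff P Q hP.nonneg hQ.nonneg).1 hsq

theorem separate_invariance_general (Δ : Matrix (Fin 3) (Fin 3) ℂ)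
    (U : Matrix (Fin 3) (Fin 3) ℂ) (R : Matrix (Fin 3) (Fin 3) ℝ)
    (hΔ : Δ.PosSemidef)
    (hU : U ∈ Matrix.unitaryGroup (Fin 3) ℂ)
    (h : U * ((R.map Complex.ofReal)ᵀ * Δ * R.map Complex.ofReal) = Δ) :
    U * Δ = Δ ∧ (R.map Complex.ofReal)ᵀ * Δ * R.map Complex.ofReal = Δ := by
  have hR : (R.map Complex.ofReal)ᵀ * Δ * R.map Complex.ofReal = Δ :=
    (hΔ.transpose_map_ofReal_mul_mul_same R).eq_of_unitary_mul_eq hΔ hU h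
  exact ⟨by rwa [hR] at h, hR⟩

/-- If `Δ` is Hermitian positive semidefinite, `U` is unitary, `R ∈ SO(3)`, and
`U Rᵀ Δ R = Δ`, then `U Δ = Δ` and `Rᵀ Δ R = Δ`. -/
theorem separate_invariance (Δ : Matrix (Fin 3) (Fin 3) ℂ)
    (U : Matrix (Fin 3) (Fin 3) ℂ) (R : Matrix (Fin 3) (Fin 3) ℝ)
    (hΔ : Δ.PosSemidef)
    (hU : U ∈ Matrix.unitaryGroup (Fin 3) ℂ)
    (hR : R ∈ Matrix.orthogonalGroup (Fin 3) ℝ) (hRdet : R.det = 1)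
    (h : U * ((R.map Complex.ofReal)ᵀ * Δ * R.map Complex.ofReal) = Δ) :
    U * Δ = Δ ∧ (R.map Complex.ofReal)ᵀ * Δ * R.map Complex.ofReal = Δ :=
  separate_invariance_general Δ U R hΔ hU h
end

section
/- For a complex 3×3 matrix Δ with B = tr((ΔΔ†)²) and C = tr(ΔΔᵀ(ΔΔᵀ)†), the equality C = B holds if and only if the matrix Z = Δ†Δ is real, i.e. Z = Z* (complex conjugate entrywise). -/
/-!
Write `Z = Δᴴ Δ`. Cycling the traces gives `B = Re tr (Z Z)` and `C = Re tr (Z Z̄)`, because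
`Δᵀ (Δᵀ)ᴴ = Z̄`. Since `Z` is Hermitian, `tr (Z Z) = ∑ |Z i j|²` while `Re tr (Z Z̄) = ∑ Re (Z i j ^ 2)`,
so `B - C = 2 ∑ (Im Z i j)²`, which vanishes exactly when `Z` is real.
-/

open Matrix

namespace Matrix

variable {m n R : Type*} [Fintype m] [Fintype n]

theorem trace_mul_mul_mul_self_comm [CommSemiring R] (A : Matrix m n R) (B : Matrix n m R) :
    trace (A * B * (A * B)) = trace (B * A * (B * A)) := by
  rw [Matrix.mul_assoc, trace_mul_comm]
  simp only [Matrix.mul_assoc]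

theorem trace_mul_mul_conjTranspose_mul [CommSemiring R] [StarRing R]
    (A : Matrix m n R) (B : Matrix n m R) :
    trace (A * B * (A * B)ᴴ) = trace (Aᴴ * A * (B * Bᴴ)) := by
  rw [conjTranspose_mul, ← Matrix.mul_assoc, trace_mul_comm]
  simp only [Matrix.mul_assoc]

omit [Fintype n] in
theorem map_star_conjTranspose_mul_self [CommSemiring R] [StarRing R] (A : Matrix m n R) :
    (Aᴴ * A).map star = Aᵀ * Aᵀᴴ := by
  ext i j
  simp [mul_apply, mul_comm]

theorem IsHermitian.re_trace_mul_self_sub_re_trace_mul_map_star {Z : Matrix n n ℂ}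
    (hZ : Z.IsHermitian) :
    (trace (Z * Z)).re - (trace (Z * Z.map star)).re = 2 * ∑ i, ∑ j, (Z i j).im ^ 2 := by
  simp only [trace, diag_apply, mul_apply, map_apply, Complex.re_sum, Finset.mul_sum,
    ← Finset.sum_sub_distrib]
  refine Finset.sum_congr rfl fun i _ => Finset.sum_congr rfl fun j _ => ?_
  rw [← hZ.apply i j]
  simp only [Complex.star_def, Complex.mul_re, Complex.conj_re, Complex.conj_im]
  ring

end Matrix

theorem Finset.sum_sum_sq_eq_zero_iff {ι κ : Type*} [Fintype ι] [Fintype κ] (f : ι → κ → ℝ) :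
    ∑ i, ∑ j, f i j ^ 2 = 0 ↔ ∀ i j, f i j = 0 := by
  simp [Finset.sum_eq_zero_iff_of_nonneg, Finset.sum_nonneg, sq_nonneg]

/-- `C = B` holds if and only if `Z = Δ†Δ` is (entrywise) real, i.e. `Z = Z*`. -/
theorem invariant_equality_real (Δ : Matrix (Fin 3) (Fin 3) ℂ)
    (B C : ℝ)
    (hB : B = ((Δ * Δᴴ * (Δ * Δᴴ)).trace).re)
    (hC : C = ((Δ * Δᵀ * (Δ * Δᵀ)ᴴ).trace).re) :
    C = B ↔ ∀ i j : Fin 3, star ((Δᴴ * Δ) i j) = (Δᴴ * Δ) i j := by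
  set Z := Δᴴ * Δ
  have hBC : B - C = 2 * ∑ i, ∑ j, (Z i j).im ^ 2 := by
    rw [hB, hC, trace_mul_mul_mul_self_comm, trace_mul_mul_conjTranspose_mul,
      ← map_star_conjTranspose_mul_self]
    exact (isHermitian_conjTranspose_mul_self Δ).re_trace_mul_self_sub_re_trace_mul_map_star
  calc C = B ↔ ∑ i, ∑ j, (Z i j).im ^ 2 = 0 := by constructor <;> intro h <;> linarith
    _ ↔ ∀ i j, (Z i j).im = 0 := Finset.sum_sum_sq_eq_zero_iff _
    _ ↔ ∀ i j, star (Z i j) = Z i j := by simp only [Complex.star_def, Complex.conj_eq_iff_im]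
end

section
/- For any complex 3×3 matrix Δ, defining A = (tr(ΔΔ†))², B = tr((ΔΔ†)²) and C = tr(ΔΔᵀ(ΔΔᵀ)†), one has (2/3)A ≤ B + C. -/
/-!
With `Z = Δᴴ Δ`, which is Hermitian, cyclicity of the trace gives `A = (tr Z)²`,
`B = tr (Z Zᴴ)` and `C = tr (Z Zᵀ)`. Entrywise, `B + C = ∑ |Z i j|² + re ∑ (Z i j)²`, in which the
imaginary parts cancel, leaving `2 ∑ (re Z i j)²`. Dropping the off-diagonal terms and applying
Cauchy–Schwarz to the diagonal gives `2 ∑ (re Z i j)² ≥ 2 ∑ (re Z i i)² ≥ (2/3) (re tr Z)²`.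
-/

open Matrix

namespace Matrix

variable {m n : Type*} [Fintype m] [Fintype n]

theorem re_trace_mul_conjTranspose_add_re_trace_mul_transpose (Z : Matrix m n ℂ) :
    (Z * Zᴴ).trace.re + (Z * Zᵀ).trace.re = 2 * ∑ i, ∑ j, (Z i j).re ^ 2 := by
  simp only [trace, diag, mul_apply, conjTranspose_apply, transpose_apply, Complex.re_sum,
    ← Finset.sum_add_distrib, Finset.mul_sum, Complex.mul_re, RCLike.star_def, Complex.conj_re,
    Complex.conj_im]
  refine Finset.sum_congr rfl fun i _ => Finset.sum_congr rfl fun j _ => ?_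
  ring

theorem sq_re_trace_le_card_mul_sum_sq_re (Z : Matrix n n ℂ) :
    Z.trace.re ^ 2 ≤ Fintype.card n * ∑ i, ∑ j, (Z i j).re ^ 2 := calc
  Z.trace.re ^ 2 = (∑ i, (Z i i).re) ^ 2 := by simp only [trace, diag, Complex.re_sum]
  _ ≤ Fintype.card n * ∑ i, (Z i i).re ^ 2 := sq_sum_le_card_mul_sum_sq
  _ ≤ Fintype.card n * ∑ i, ∑ j, (Z i j).re ^ 2 := by
    gcongr with i
    exact Finset.single_le_sum (f := fun j => (Z i j).re ^ 2) (fun j _ => sq_nonneg _)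
      (Finset.mem_univ i)

theorem two_mul_sq_re_trace_le_card_mul (Z : Matrix n n ℂ) :
    2 * Z.trace.re ^ 2 ≤ Fintype.card n * ((Z * Zᴴ).trace.re + (Z * Zᵀ).trace.re) := by
  rw [re_trace_mul_conjTranspose_add_re_trace_mul_transpose]
  linarith [sq_re_trace_le_card_mul_sum_sq_re Z]

theorem trace_mul_conjTranspose_mul_mul_conjTranspose (Δ : Matrix m n ℂ) :
    (Δ * Δᴴ * (Δ * Δᴴ)).trace = (Δᴴ * Δ * (Δᴴ * Δ)ᴴ).trace := by
  rw [(isHermitian_conjTranspose_mul_self Δ).eq]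
  simp only [Matrix.mul_assoc]
  rw [trace_mul_comm Δ]
  simp only [Matrix.mul_assoc]

theorem trace_mul_transpose_mul_conjTranspose (Δ : Matrix m n ℂ) :
    (Δ * Δᵀ * (Δ * Δᵀ)ᴴ).trace = (Δᴴ * Δ * (Δᴴ * Δ)ᵀ).trace := by
  rw [conjTranspose_mul, transpose_mul, conjTranspose_transpose_eq_transpose_conjTranspose]
  simp only [Matrix.mul_assoc]
  rw [trace_mul_comm Δᴴ]
  simp only [Matrix.mul_assoc]

end Matrix

/-- With `A = (tr(ΔΔ†))²`, `B = tr((ΔΔ†)²)`, `C = tr(ΔΔᵀ(ΔΔᵀ)†)`,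
one has `(2/3) A ≤ B + C`. -/
theorem invariant_inequality_ABC (Δ : Matrix (Fin 3) (Fin 3) ℂ)
    (A B C : ℝ)
    (hA : A = ((Δ * Δᴴ).trace).re ^ 2)
    (hB : B = ((Δ * Δᴴ * (Δ * Δᴴ)).trace).re)
    (hC : C = ((Δ * Δᵀ * (Δ * Δᵀ)ᴴ).trace).re) :
    2 / 3 * A ≤ B + C := by
  have key := two_mul_sq_re_trace_le_card_mul (Δᴴ * Δ)
  rw [← trace_mul_conjTranspose_mul_mul_conjTranspose, ← trace_mul_transpose_mul_conjTranspose,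
    trace_mul_comm Δᴴ, Fintype.card_fin] at key
  subst hA hB hC
  push_cast at key
  linarith
end

section
/- Let d₂, d₃ be real with d₂ + d₃ < 0 and d₃ < 0. Then for every complex 3×3 matrix Δ, with A, B, C defined as above, d₂B + d₃C ≥ (d₂+d₃)A. -/
/-!
In Frobenius norms, `A = ‖Δ‖⁴`, `B = ‖Δ Δᴴ‖²` and `C = ‖Δ Δᵀ‖²`. Submultiplicativity gives
`B ≤ A`, and writing `G = Δᴴ Δ` one has `C = re tr (G Gᵀ) = re ∑ G_ij² ≤ ∑ |G_ij|² = B`.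
The claim follows from `d₂ B + d₃ C - (d₂ + d₃) A = (d₂ + d₃) (B - A) + d₃ (C - B)`.
-/

open Matrix

open scoped Matrix.Norms.Frobenius

namespace Matrix

variable {𝕜 m n : Type*} [RCLike 𝕜] [Fintype m] [Fintype n]

theorem frobenius_norm_sq (M : Matrix m n 𝕜) : ‖M‖ ^ 2 = ∑ i, ∑ j, ‖M i j‖ ^ 2 := by
  rw [frobenius_norm_def, ← Real.sqrt_eq_rpow, Real.sq_sqrt (by positivity)]
  simp only [Real.rpow_two]

theorem re_trace_mul_conjTranspose_self (M : Matrix m n 𝕜) :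
    RCLike.re (M * Mᴴ).trace = ‖M‖ ^ 2 := by
  simp [frobenius_norm_sq, trace, mul_apply, RCLike.mul_conj]

theorem re_trace_mul_transpose_self_le (M : Matrix n n 𝕜) :
    RCLike.re (M * Mᵀ).trace ≤ ‖M‖ ^ 2 := by
  simp only [frobenius_norm_sq, trace, diag_apply, mul_apply, transpose_apply, map_sum]
  gcongr with i _ j _
  exact (RCLike.re_le_norm _).trans_eq (by rw [norm_mul, sq])

theorem frobenius_norm_mul_conjTranspose_self_le (M : Matrix m n 𝕜) : ‖M * Mᴴ‖ ≤ ‖M‖ ^ 2 :=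
  (frobenius_norm_mul M Mᴴ).trans_eq (by rw [frobenius_norm_conjTranspose, sq])

theorem frobenius_norm_mul_transpose_self_le (M : Matrix m n 𝕜) : ‖M * Mᵀ‖ ≤ ‖M * Mᴴ‖ := by
  set G := Mᴴ * M
  have hC : ‖M * Mᵀ‖ ^ 2 = RCLike.re (G * Gᵀ).trace := by
    rw [← re_trace_mul_conjTranspose_self]
    simp only [G, conjTranspose_mul, transpose_mul,
      conjTranspose_transpose_eq_transpose_conjTranspose, Matrix.mul_assoc]
    rw [trace_mul_comm Mᴴ]
    simp only [Matrix.mul_assoc]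
  have hB : ‖M * Mᴴ‖ ^ 2 = ‖G‖ ^ 2 := by
    rw [← re_trace_mul_conjTranspose_self, ← re_trace_mul_conjTranspose_self]
    simp only [G, conjTranspose_mul, conjTranspose_conjTranspose, Matrix.mul_assoc]
    rw [trace_mul_comm Mᴴ]
    simp only [Matrix.mul_assoc]
  have hCB : ‖M * Mᵀ‖ ^ 2 ≤ ‖M * Mᴴ‖ ^ 2 := hC ▸ hB ▸ re_trace_mul_transpose_self_le G
  exact pow_le_pow_iff_left₀ (norm_nonneg _) (norm_nonneg _) two_ne_zero |>.mp hCB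

end Matrix

/-- For `d₂ + d₃ < 0` and `d₃ < 0`: `d₂B + d₃C ≥ (d₂+d₃)A`. -/
theorem quartic_bound_polar (d₂ d₃ : ℝ) (h₁ : d₂ + d₃ < 0) (h₂ : d₃ < 0)
    (Δ : Matrix (Fin 3) (Fin 3) ℂ)
    (A B C : ℝ)
    (hA : A = ((Δ * Δᴴ).trace).re ^ 2)
    (hB : B = ((Δ * Δᴴ * (Δ * Δᴴ)).trace).re)
    (hC : C = ((Δ * Δᵀ * (Δ * Δᵀ)ᴴ).trace).re) :
    d₂ * B + d₃ * C ≥ (d₂ + d₃) * A := by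
  have hA' : A = (‖Δ‖ ^ 2) ^ 2 := hA.trans (congrArg (· ^ 2) (re_trace_mul_conjTranspose_self Δ))
  have hB' : B = ‖Δ * Δᴴ‖ ^ 2 := by
    conv_rhs => rw [← re_trace_mul_conjTranspose_self, (isHermitian_mul_conjTranspose_self Δ).eq]
    exact hB
  have hC' : C = ‖Δ * Δᵀ‖ ^ 2 := hC.trans (re_trace_mul_conjTranspose_self (Δ * Δᵀ))
  have hBA : B ≤ A := by
    rw [hA', hB']
    exact pow_le_pow_left₀ (norm_nonneg _) (frobenius_norm_mul_conjTranspose_self_le Δ) 2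
  have hCB : C ≤ B := by
    rw [hB', hC']
    exact pow_le_pow_left₀ (norm_nonneg _) (frobenius_norm_mul_transpose_self_le Δ) 2
  linarith [mul_le_mul_of_nonpos_left hBA h₁.le, mul_le_mul_of_nonpos_left hCB h₂.le]
end
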